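/- Let Q be a real inner product space of dimension q = 2m (m ≥ 2) with an orthogonal almost complex structure J. Suppose T is a map satisfying (q+1)·T(E_a,E_b)E_c = H_{ab}E_c + H_{ac}E_b − H_{ba}E_c − H_{bc}E_a for a q×q real matrix H, and T(JX,JY) = T(X,Y) for all X,Y. Then (q−2)·Σ_a H_{aa} = 0; in particular since q > 2, the trace Σ_a H_{aa} = 0. -/

import Mathlib

/-!
Write `R(X,Y)Z = h(X,Y)Z + h(X,Z)Y - h(Y,X)Z - h(Y,Z)X` for the bilinear form `h` with matrix `H`,
so that `R = (q+1)T`. Contracting along an orthonormal basis gives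
`∑_b ⟪E_b, R(X,E_b)X⟫ = (q-1) h(X,X)`. The contraction is the trace of `Y ↦ R(X,Y)X`, so it may be
computed along the orthonormal basis `(J E_b)` instead, and `J`-invariance turns `R(X, J E_b)` into
`-R(J X, E_b)`; evaluated this way the contraction is `h(X,X)`. Hence `(q-2) h(X,X) = 0`, and
summing over `X = E_a` gives `(q-2) tr H = 0`.
-/

open scoped RealInnerProductSpace
section Algebraic

variable {R M ι : Type*} [CommRing R] [AddCommGroup M] [Module R M]

-- For a transversal projective field, `(q+1)` times the Lie derivative of the curvature has this
-- form, `h` being the Hessian of the divergence.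
def projectiveTensor (h : LinearMap.BilinForm R M) : M →ₗ[R] M →ₗ[R] M →ₗ[R] M := by
  refine LinearMap.mk₂ R
    (fun X Y => (h X Y - h Y X) • LinearMap.id + (h X).smulRight Y - (h Y).smulRight X)
    ?_ ?_ ?_ ?_ <;> intros <;> ext <;>
  simp only [map_add, map_smul, smul_eq_mul, LinearMap.add_apply, LinearMap.sub_apply,
    LinearMap.smul_apply, LinearMap.id_coe, id_eq, LinearMap.coe_smulRight] <;>
  module

@[simp]
lemma projectiveTensor_apply (h : LinearMap.BilinForm R M) (X Y Z : M) :
    projectiveTensor h X Y Z = h X Y • Z + h X Z • Y - h Y X • Z - h Y Z • X := by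
  simp only [projectiveTensor, LinearMap.mk₂_apply, LinearMap.sub_apply, LinearMap.add_apply,
    LinearMap.smul_apply, LinearMap.id_coe, id_eq, LinearMap.coe_smulRight]
  module

lemma Matrix.toBilin_apply_basis [Fintype ι] [DecidableEq ι] (b : Module.Basis ι R M)
    (H : Matrix ι ι R) (i j : ι) : Matrix.toBilin b H (b i) (b j) = H i j := by
  rw [← LinearMap.BilinForm.toMatrix_apply b, ← LinearMap.BilinForm.toMatrix_symm,
    LinearEquiv.apply_symm_apply]

lemma smul_eq_projectiveTensor_toBilin [Fintype ι] [DecidableEq ι] (b : Module.Basis ι R M)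
    (H : Matrix ι ι R) (c : R) (T : M →ₗ[R] M →ₗ[R] M →ₗ[R] M)
    (hT : ∀ i j k, c • T (b i) (b j) (b k) =
      H i j • b k + H i k • b j - H j i • b k - H j k • b i) :
    c • T = projectiveTensor (Matrix.toBilin b H) :=
  LinearMap.ext_basis b b fun i j => b.ext fun k => by
    simp only [LinearMap.smul_apply, projectiveTensor_apply, Matrix.toBilin_apply_basis, hT]

end Algebraic

section InnerProduct

variable {V ι : Type*} [NormedAddCommGroup V] [InnerProductSpace ℝ V] [Fintype ι]
  (E : OrthonormalBasis ι ℝ V)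

lemma OrthonormalBasis.sum_bilin_mul_inner_right (h : LinearMap.BilinForm ℝ V) (X Y : V) :
    ∑ b, h X (E b) * ⟪E b, Y⟫ = h X Y := by
  conv_rhs => rw [← E.sum_repr' Y]
  simp [mul_comm]

lemma OrthonormalBasis.sum_bilin_mul_inner_left (h : LinearMap.BilinForm ℝ V) (X Y : V) :
    ∑ b, h (E b) X * ⟪E b, Y⟫ = h Y X :=
  E.sum_bilin_mul_inner_right h.flip X Y

lemma OrthonormalBasis.sum_inner_projectiveTensor (h : LinearMap.BilinForm ℝ V) (X : V) :
    ∑ b, ⟪E b, projectiveTensor h X (E b) X⟫ = ((Fintype.card ι : ℝ) - 1) * h X X := by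
  simp only [projectiveTensor_apply, inner_sub_right, inner_add_right, real_inner_smul_right,
    E.inner_eq_one, Finset.sum_sub_distrib, Finset.sum_add_distrib,
    E.sum_bilin_mul_inner_right, E.sum_bilin_mul_inner_left]
  simp only [mul_one, Finset.sum_const, Finset.card_univ, nsmul_eq_mul]
  ring

variable {J : V →ₗ[ℝ] V} (hJ2 : ∀ X, J (J X) = -X) (hJg : ∀ X Y, ⟪J X, J Y⟫ = ⟪X, Y⟫)

include hJ2 hJg in
lemma inner_complexStructure_left (X Y : V) : ⟪J X, Y⟫ = -⟪X, J Y⟫ := by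
  rw [← hJg X (J Y), hJ2, inner_neg_right, neg_neg]

include hJ2 hJg in
lemma inner_complexStructure_self (X : V) : ⟪J X, X⟫ = 0 := by
  have h := inner_complexStructure_left hJ2 hJg X X
  rw [real_inner_comm] at h ⊢
  linarith

noncomputable def complexStructureIsometry : V ≃ₗᵢ[ℝ] V :=
  (LinearEquiv.ofLinearMap J (-J) (by ext; simp [hJ2]) (by ext; simp [hJ2])).isometryOfInner hJg

include hJ2 hJg in
lemma OrthonormalBasis.sum_inner_complexStructure (L : V →ₗ[ℝ] V) :
    ∑ b, ⟪J (E b), L (J (E b))⟫ = ∑ b, ⟪E b, L (E b)⟫ := by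
  rw [← L.trace_eq_sum_inner E, L.trace_eq_sum_inner (E.map (complexStructureIsometry hJ2 hJg))]
  rfl

include hJ2 hJg in
lemma OrthonormalBasis.sum_inner_projectiveTensor_complexStructure
    (h : LinearMap.BilinForm ℝ V) (X : V) :
    ∑ b, ⟪J (E b), projectiveTensor h (J X) (E b) X⟫ = -h X X := by
  simp only [projectiveTensor_apply, inner_sub_right, inner_add_right, real_inner_smul_right,
    hJg, inner_complexStructure_self hJ2 hJg, inner_complexStructure_left hJ2 hJg _ X, mul_neg,
    mul_zero, add_zero, Finset.sum_sub_distrib, Finset.sum_neg_distrib,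
    E.sum_bilin_mul_inner_right, E.sum_bilin_mul_inner_left]
  ring

include hJ2 in
lemma projectiveTensor_complexStructure_right (h : LinearMap.BilinForm ℝ V)
    (hR : ∀ X Y Z, projectiveTensor h (J X) (J Y) Z = projectiveTensor h X Y Z) (X Y Z : V) :
    projectiveTensor h X (J Y) Z = -projectiveTensor h (J X) Y Z := by
  rw [← hR (J X), hJ2, map_neg, LinearMap.neg_apply, LinearMap.neg_apply, neg_neg]

include hJ2 hJg in
lemma OrthonormalBasis.card_sub_two_mul_sum_bilin_eq_zero (h : LinearMap.BilinForm ℝ V)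
    (hR : ∀ X Y Z, projectiveTensor h (J X) (J Y) Z = projectiveTensor h X Y Z) :
    ((Fintype.card ι : ℝ) - 2) * ∑ a, h (E a) (E a) = 0 := by
  have hdiag (X : V) : ((Fintype.card ι : ℝ) - 1) * h X X = h X X :=
    calc ((Fintype.card ι : ℝ) - 1) * h X X
        = ∑ b, ⟪E b, (projectiveTensor h X).flip X (E b)⟫ := (E.sum_inner_projectiveTensor h X).symm
      _ = ∑ b, ⟪J (E b), (projectiveTensor h X).flip X (J (E b))⟫ :=
          (E.sum_inner_complexStructure hJ2 hJg _).symm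
      _ = -∑ b, ⟪J (E b), projectiveTensor h (J X) (E b) X⟫ := by
          simp only [LinearMap.flip_apply, projectiveTensor_complexStructure_right hJ2 h hR,
            inner_neg_right, Finset.sum_neg_distrib]
      _ = h X X := by rw [E.sum_inner_projectiveTensor_complexStructure hJ2 hJg, neg_neg]
  have hsum : ∑ a, ((Fintype.card ι : ℝ) - 1) * h (E a) (E a) = ∑ a, h (E a) (E a) :=
    Finset.sum_congr rfl fun a _ => hdiag (E a)
  rw [← Finset.mul_sum] at hsum
  linear_combination hsum

end InnerProduct

theorem stmt1_general
    {V : Type*} [NormedAddCommGroup V] [InnerProductSpace ℝ V]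
    (m q : ℕ) (hq : q = 2 * m) (hm : 2 ≤ m)
    (E : OrthonormalBasis (Fin q) ℝ V)
    (J : V →ₗ[ℝ] V)
    (hJ2 : ∀ X : V, J (J X) = -X)
    (hJg : ∀ X Y : V, ⟪J X, J Y⟫ = ⟪X, Y⟫)
    (T : V →ₗ[ℝ] V →ₗ[ℝ] V →ₗ[ℝ] V)
    (H : Fin q → Fin q → ℝ)
    (hT : ∀ a b c : Fin q,
      ((q : ℝ) + 1) • T (E a) (E b) (E c) =
        H a b • E c + H a c • E b - H b a • E c - H b c • E a)
    (hTJ : ∀ X Y Z : V, T (J X) (J Y) Z = T X Y Z) :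
    ((q : ℝ) - 2) * (∑ a : Fin q, H a a) = 0 ∧ ∑ a : Fin q, H a a = 0 := by
  have hRT : ((q : ℝ) + 1) • T = projectiveTensor (Matrix.toBilin E.toBasis H) :=
    smul_eq_projectiveTensor_toBilin E.toBasis H _ T (by simpa only [E.coe_toBasis] using hT)
  have hR : ∀ X Y Z, projectiveTensor (Matrix.toBilin E.toBasis H) (J X) (J Y) Z =
      projectiveTensor (Matrix.toBilin E.toBasis H) X Y Z := by
    simp [← hRT, hTJ]
  have htrace := E.card_sub_two_mul_sum_bilin_eq_zero hJ2 hJg _ hR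
  have hH (a : Fin q) : Matrix.toBilin E.toBasis H (E a) (E a) = H a a := by
    simpa only [E.coe_toBasis] using Matrix.toBilin_apply_basis E.toBasis H a a
  simp only [Fintype.card_fin, hH] at htrace
  have hq2 : (q : ℝ) - 2 ≠ 0 := by
    have : (4 : ℝ) ≤ q := by exact_mod_cast (by omega : 4 ≤ q)
    linarith
  exact ⟨htrace, (mul_eq_zero.mp htrace).resolve_left hq2⟩

/-- On a real inner product space of dimension `q = 2m` (`m ≥ 2`) with an
orthogonal almost complex structure `J`, if a trilinear map `T` satisfies
`(q+1)·T(E_a,E_b)E_c = H_{ab}E_c + H_{ac}E_b − H_{ba}E_c − H_{bc}E_a` for a real matrix `H`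
and `T(JX,JY) = T(X,Y)`, then `(q−2)·Σ_a H_{aa} = 0`; in particular since `q > 2`,
the trace `Σ_a H_{aa} = 0`. -/
theorem stmt1
    {V : Type*} [NormedAddCommGroup V] [InnerProductSpace ℝ V]
    (m q : ℕ) (hq : q = 2 * m) (hm : 2 ≤ m) [FiniteDimensional ℝ V]
    (hdim : Module.finrank ℝ V = q)
    (E : OrthonormalBasis (Fin q) ℝ V)
    (J : V →ₗ[ℝ] V)
    (hJ2 : ∀ X : V, J (J X) = -X)
    (hJg : ∀ X Y : V, ⟪J X, J Y⟫ = ⟪X, Y⟫)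
    (T : V →ₗ[ℝ] V →ₗ[ℝ] V →ₗ[ℝ] V)
    (H : Fin q → Fin q → ℝ)
    (hT : ∀ a b c : Fin q,
      ((q : ℝ) + 1) • T (E a) (E b) (E c) =
        H a b • E c + H a c • E b - H b a • E c - H b c • E a)
    (hTJ : ∀ X Y Z : V, T (J X) (J Y) Z = T X Y Z) :
    ((q : ℝ) - 2) * (∑ a : Fin q, H a a) = 0 ∧ ∑ a : Fin q, H a a = 0 :=
  stmt1_general m q hq hm E J hJ2 hJg T H hT hTJ
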